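/- An assignment a_0,...,a_{2^h−1} ∈ {0,1} to the variables of the balancing formula of height h is accepted (root does not evaluate to F) if and only if for every 0 < k ≤ h and every 0 ≤ i < 2^{h−k}, the number of 1-values among a_{i·2^k},...,a_{(i+1)·2^k−1} is either 0, 2^k, or 2^{k−1}. -/

import Mathlib

/-!
Read the gate as averaging: below a node that is not `F`, the values `0`, `P`, `1` mean that
exactly none, half, or all of its leaves are `1`. The gate returns `F` precisely when the average
of its children's fractions is `1/4` or `3/4`, i.e. when the `1`s of the parent block are not
`0`, half, or all of it. So the root avoids `F` iff every block passes this test.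
-/

/-- The 4-letter alphabet `Σ = {0, 1, P, F}` of the balancing formula. -/
inductive Sig4 where
  | zero | one | P | F
deriving DecidableEq

/-- The balancing gate. -/
def bgate : Sig4 → Sig4 → Sig4
  | .zero, .zero => .zero
  | .one, .one => .one
  | .one, .zero => .P
  | .zero, .one => .P
  | .P, .P => .P
  | _, _ => .F

/-- The value computed at the root of the balancing formula of height `h`
on the Boolean input `a` (read at positions `0, …, 2^h - 1`). -/
def balEval : ℕ → (ℕ → Bool) → Sig4
  | 0, a => if a 0 then .one else .zero
  | h + 1, a => bgate (balEval h a) (balEval h (fun i => a (i + 2 ^ h)))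

/-- The number of `1`-values among the first `m` positions of `a`. -/
def ones (m : ℕ) (a : ℕ → Bool) : ℕ :=
  ((Finset.range m).filter (fun j => a j = true)).card

/-- The fraction of `1`-leaves below a node with this value, in halves (`F` gets a junk `0`). -/
def Sig4.halves : Sig4 → ℕ
  | .zero => 0
  | .P => 1
  | .one => 2
  | .F => 0

lemma Sig4.halves_le_two (x : Sig4) : x.halves ≤ 2 := by
  cases x <;> decide

lemma bgate_ne_F_iff (x y : Sig4) :
    bgate x y ≠ .F ↔ x ≠ .F ∧ y ≠ .F ∧ Even (x.halves + y.halves) := by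
  cases x <;> cases y <;> decide

lemma two_mul_halves_bgate {x y : Sig4} (hxy : bgate x y ≠ .F) :
    2 * (bgate x y).halves = x.halves + y.halves := by
  cases x <;> cases y <;> simp_all [bgate, Sig4.halves]

lemma ones_add (m n : ℕ) (a : ℕ → Bool) :
    ones (m + n) a = ones m a + ones n (fun j => a (m + j)) := by
  simp only [ones, Finset.card_filter, Finset.sum_range_add]

lemma ones_two_pow_succ (h : ℕ) (a : ℕ → Bool) :
    ones (2 ^ (h + 1)) a = ones (2 ^ h) a + ones (2 ^ h) (fun j => a (j + 2 ^ h)) := by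
  simp only [pow_succ, mul_two, ones_add, Nat.add_comm (2 ^ h)]

lemma two_mul_ones_balEval {h : ℕ} {a : ℕ → Bool} (ha : balEval h a ≠ .F) :
    2 * ones (2 ^ h) a = (balEval h a).halves * 2 ^ h := by
  induction h generalizing a with
  | zero =>
    cases h0 : a 0 <;>
      simp [balEval, ones, Finset.range_one, Finset.filter_singleton, h0, Sig4.halves]
  | succ h ih =>
    obtain ⟨hl, hr, -⟩ := (bgate_ne_F_iff _ _).mp ha
    rw [ones_two_pow_succ, mul_add, ih hl, ih hr, ← add_mul, balEval, ← two_mul_halves_bgate ha,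
      pow_succ]
    ring

lemma ones_mem_iff_even {h n s : ℕ} (hs : s ≤ 4) (hn : 2 * n = s * 2 ^ h) :
    (n = 0 ∨ n = 2 ^ (h + 1) ∨ n = 2 ^ h) ↔ Even s := by
  have hpos : 0 < 2 ^ h := Nat.two_pow_pos h
  rw [pow_succ, Nat.even_iff]
  interval_cases s <;> omega

def HasBalancedBlocks (h : ℕ) (a : ℕ → Bool) : Prop :=
  ∀ k, 0 < k → k ≤ h → ∀ i, i < 2 ^ (h - k) →
    ones (2 ^ k) (fun j => a (i * 2 ^ k + j)) = 0 ∨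
    ones (2 ^ k) (fun j => a (i * 2 ^ k + j)) = 2 ^ k ∨
    ones (2 ^ k) (fun j => a (i * 2 ^ k + j)) = 2 ^ (k - 1)

lemma two_pow_succ_sub {h k : ℕ} (hk : k ≤ h) : 2 ^ (h + 1 - k) = 2 * 2 ^ (h - k) := by
  rw [Nat.sub_add_comm hk, pow_succ, mul_comm]

lemma two_pow_sub_add_mul {h k : ℕ} (hk : k ≤ h) (i j : ℕ) :
    (2 ^ (h - k) + i) * 2 ^ k + j = i * 2 ^ k + j + 2 ^ h := by
  rw [add_mul, ← pow_add, Nat.sub_add_cancel hk]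
  ring

lemma hasBalancedBlocks_succ_iff {h : ℕ} {a : ℕ → Bool} :
    HasBalancedBlocks (h + 1) a ↔
      HasBalancedBlocks h a ∧ HasBalancedBlocks h (fun j => a (j + 2 ^ h)) ∧
      (ones (2 ^ (h + 1)) a = 0 ∨ ones (2 ^ (h + 1)) a = 2 ^ (h + 1) ∨
        ones (2 ^ (h + 1)) a = 2 ^ h) := by
  constructor
  · intro hb
    refine ⟨fun k hk hkh i hi => hb k hk (by omega) i (by rw [two_pow_succ_sub hkh]; omega),
      fun k hk hkh i hi => ?_, by simpa using hb (h + 1) (by omega) le_rfl 0 (by simp)⟩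
    simpa only [two_pow_sub_add_mul hkh] using
      hb k hk (by omega) (2 ^ (h - k) + i) (by rw [two_pow_succ_sub hkh]; omega)
  · rintro ⟨hl, hr, htop⟩ k hk hkh i hi
    obtain rfl | hkh := hkh.eq_or_lt
    · obtain rfl : i = 0 := by simpa using hi
      simpa using htop
    rw [two_pow_succ_sub (by omega)] at hi
    by_cases hi' : i < 2 ^ (h - k)
    · exact hl k hk (by omega) i hi'
    obtain ⟨i, rfl⟩ := Nat.exists_eq_add_of_le (not_lt.mp hi')
    simpa only [two_pow_sub_add_mul (by omega : k ≤ h)] using hr k hk (by omega) i (by omega)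

theorem balEval_ne_F_iff_hasBalancedBlocks (h : ℕ) (a : ℕ → Bool) :
    balEval h a ≠ .F ↔ HasBalancedBlocks h a := by
  induction h generalizing a with
  | zero =>
    refine iff_of_true ?_ fun k hk hk0 => absurd hk0 (by omega)
    cases h0 : a 0 <;> simp [balEval, h0]
  | succ h ih =>
    rw [balEval, bgate_ne_F_iff, hasBalancedBlocks_succ_iff, ← ih, ← ih]
    refine and_congr_right fun hl => and_congr_right fun hr => ?_
    have hs : (balEval h a).halves + (balEval h (fun j => a (j + 2 ^ h))).halves ≤ 4 :=
      add_le_add (Sig4.halves_le_two _) (Sig4.halves_le_two _)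
    refine (ones_mem_iff_even hs ?_).symm
    rw [ones_two_pow_succ, mul_add, two_mul_ones_balEval hl, two_mul_ones_balEval hr, add_mul]

/-- an assignment is accepted by the balancing formula of
height `h` (the root does not evaluate to `F`) iff for every `0 < k ≤ h` and
`0 ≤ i < 2^{h-k}`, the number of `1`s in the `i`-th block of length `2^k` is
`0`, `2^k` or `2^{k-1}`. -/
theorem balancing_accept_iff (h : ℕ) (a : ℕ → Bool) :
    balEval h a ≠ Sig4.F ↔
    ∀ k, 0 < k → k ≤ h → ∀ i, i < 2 ^ (h - k) →
      ones (2 ^ k) (fun j => a (i * 2 ^ k + j)) = 0 ∨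
      ones (2 ^ k) (fun j => a (i * 2 ^ k + j)) = 2 ^ k ∨
      ones (2 ^ k) (fun j => a (i * 2 ^ k + j)) = 2 ^ (k - 1) :=
  balEval_ne_F_iff_hasBalancedBlocks h a
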